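/- Let V : C(S^{n-1})₊ → ℝ be a valuation that is continuous with respect to the supremum norm, uniformly continuous on bounded sets, and of bounded variation. Then the variation function |V|(f) = |V|([0,f]) is continuous with respect to the supremum norm on C(S^{n-1})₊. -/

import Mathlib

open MeasureTheory Filter Topology

variable {n : ℕ}

/-- The set of chain sums `Σ |V(f_k) − V(f_{k−1})|` over finite increasing chains
`f = f_0 ≤ f_1 ≤ ⋯ ≤ f_m = g` in `C(S^{n-1})₊`. -/
def chainSums (V : C(Metric.sphere (0 : EuclideanSpace ℝ (Fin n)) 1, ℝ) → ℝ)
    (f g : C(Metric.sphere (0 : EuclideanSpace ℝ (Fin n)) 1, ℝ)) : Set ℝ :=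
  {x | ∃ (m : ℕ) (c : ℕ → C(Metric.sphere (0 : EuclideanSpace ℝ (Fin n)) 1, ℝ)),
    c 0 = f ∧ c m = g ∧ (∀ k < m, c k ≤ c (k+1)) ∧ (∀ k ≤ m, 0 ≤ c k) ∧
    x = ∑ k ∈ Finset.range m, |V (c (k+1)) - V (c k)|}

/-- The variation `|V|([f,g])` of `V` on the order interval `[f,g]`. -/
noncomputable def variation (V : C(Metric.sphere (0 : EuclideanSpace ℝ (Fin n)) 1, ℝ) → ℝ)
    (f g : C(Metric.sphere (0 : EuclideanSpace ℝ (Fin n)) 1, ℝ)) : ℝ :=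
  sSup (chainSums V f g)


/-!
Chain sums add under concatenation, and the valuation property lets one cut a chain over
`[a, b]` at any `p ∈ [a, b]` (replace each link `c` by `c ⊓ p` and by `c ⊔ p`): its sum is at most
a chain sum over `[a, p]` plus one over `[p, b]`. So if `|f - h| ≤ δ`, then
`|V|(h) ≤ |V|(f) + |V|([f, f + δ])` and `|V|(f) ≤ |V|(h) + |V|([(f - δ)⁺, f])`, and it suffices
that the variation over these two thin intervals tends to `0` with `δ`. If it did not, a chain over
`[f, f + s]` with sum `> ε` could, by continuity of `V` at its finitely many links, be shifted by
a tiny `t` at a cost `< ε / 2` and glued after a chain over `[f, f + t]`; iterating gives chains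
over `[f, f + 1]` with unbounded sums, against bounded variation.
-/

local notation "𝕊" n => Metric.sphere (0 : EuclideanSpace ℝ (Fin n)) (1 : ℝ)

open Set ContinuousMap

def IsValuation (V : C(𝕊 n, ℝ) → ℝ) : Prop :=
  ∀ f g : C(𝕊 n, ℝ), 0 ≤ f → 0 ≤ g → V (f ⊔ g) + V (f ⊓ g) = V f + V g

def ContinuousOnNonneg (V : C(𝕊 n, ℝ) → ℝ) : Prop :=
  ∀ f : C(𝕊 n, ℝ), 0 ≤ f → ∀ ε > 0, ∃ δ > 0, ∀ g, 0 ≤ g →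
    (∀ x, |f x - g x| ≤ δ) → |V f - V g| ≤ ε

-- `A t` plays the role of the set of chain sums over an interval of length `t`.
theorem exists_pos_forall_le_of_almost_superadditive {A : ℝ → Set ℝ} {M : ℝ}
    (hbdd : ∀ t ∈ Ioc (0 : ℝ) 1, ∀ S ∈ A t, S ≤ M)
    (hglue : ∀ s > 0, ∀ S ∈ A s, ∀ e > 0, ∃ η > 0,
      ∀ t ∈ Ioc 0 η, ∀ S' ∈ A t, ∃ S'' ∈ A (t + s), S' + S - e ≤ S'')
    {ε : ℝ} (hε : 0 < ε) : ∃ δ > 0, ∀ S ∈ A δ, S ≤ ε := by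
  by_contra! hlarge
  have hgrow : ∀ N : ℕ, ∀ β > 0, ∃ t ∈ Ioc 0 β, ∃ S ∈ A t, (N + 1) * (ε / 2) ≤ S := by
    intro N
    induction N with
    | zero =>
      intro β hβ
      obtain ⟨S, hS, hεS⟩ := hlarge β hβ
      exact ⟨β, ⟨hβ, le_rfl⟩, S, hS, by linarith⟩
    | succ N ih =>
      intro β hβ
      obtain ⟨S, hS, hεS⟩ := hlarge (β / 2) (by positivity)
      obtain ⟨η, hη, hglueS⟩ := hglue (β / 2) (by positivity) S hS (ε / 2) (by positivity)
      obtain ⟨t, ⟨ht, htβ⟩, S', hS', hNS'⟩ := ih (min η (β / 2)) (lt_min hη (by positivity))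
      obtain ⟨S'', hS'', hS'S''⟩ := hglueS t ⟨ht, htβ.trans (min_le_left _ _)⟩ S' hS'
      refine ⟨t + β / 2, ⟨by positivity, by linarith [min_le_right η (β / 2)]⟩, S'', hS'', ?_⟩
      push_cast
      linarith
  obtain ⟨N, hN⟩ := exists_nat_gt (M / (ε / 2))
  obtain ⟨t, ht, S, hS, hNS⟩ := hgrow N 1 one_pos
  have : M < (N + 1) * (ε / 2) := by
    rw [div_lt_iff₀ (by positivity)] at hN
    linarith
  linarith [hbdd t ht S hS]

section Chains

variable {V : C(𝕊 n, ℝ) → ℝ} {f g h : C(𝕊 n, ℝ)} {S S' : ℝ}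

theorem nonneg_of_mem_chainSums (hS : S ∈ chainSums V f g) : 0 ≤ f ∧ 0 ≤ g := by
  obtain ⟨m, c, rfl, rfl, -, hpos, -⟩ := hS
  exact ⟨hpos 0 (Nat.zero_le m), hpos m le_rfl⟩

theorem abs_sub_mem_chainSums (hf : 0 ≤ f) (hfg : f ≤ g) :
    |V g - V f| ∈ chainSums V f g := by
  refine ⟨1, fun k => if k = 0 then f else g, rfl, rfl, ?_, ?_, by simp⟩
  · intro k hk
    obtain rfl : k = 0 := by omega
    simpa using hfg
  · intro k _
    dsimp only
    split_ifs
    exacts [hf, hf.trans hfg]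

theorem add_mem_chainSums (hS : S ∈ chainSums V f g) (hS' : S' ∈ chainSums V g h) :
    S + S' ∈ chainSums V f h := by
  obtain ⟨m, c, rfl, rfl, hmono, hpos, rfl⟩ := hS
  obtain ⟨m', c', hc'0, rfl, hmono', hpos', rfl⟩ := hS'
  set e : ℕ → C(𝕊 n, ℝ) := fun k => if k ≤ m then c k else c' (k - m)
  have he : ∀ k ≤ m, e k = c k := fun k hk => if_pos hk
  have he' : ∀ k, e (m + k) = c' k := by
    intro k
    rcases Nat.eq_zero_or_pos k with rfl | hk
    · simp [e, hc'0]
    · simp [e, hk.ne']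
  have hsplit : ∀ {P : ℕ → Prop}, (∀ k < m, P k) → (∀ k, P (m + k)) → ∀ k, P k := by
    intro P hlt hge k
    rcases lt_or_ge k m with hk | hk
    · exact hlt k hk
    · simpa [Nat.add_sub_cancel' hk] using hge (k - m)
  refine ⟨m + m', e, he 0 (Nat.zero_le m), by rw [he'], ?_, ?_, ?_⟩
  · refine hsplit (fun k hk _ => ?_) (fun k hk => ?_)
    · rw [he k hk.le, he (k + 1) hk]
      exact hmono k hk
    · rw [add_assoc, he', he']
      exact hmono' k (by omega)
  · refine hsplit (fun k hk _ => ?_) (fun k hk => ?_)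
    · rw [he k hk.le]; exact hpos k hk.le
    · rw [he']; exact hpos' k (by omega)
  · rw [Finset.sum_range_add]
    congr 1
    · refine Finset.sum_congr rfl fun k hk => ?_
      rw [Finset.mem_range] at hk
      rw [he k hk.le, he (k + 1) hk]
    · refine Finset.sum_congr rfl fun k _ => ?_
      rw [add_assoc, he', he']

theorem exists_mem_chainSums_ge_of_le_right {g' : C(𝕊 n, ℝ)} (hS : S ∈ chainSums V f g)
    (hgg' : g ≤ g') : ∃ S' ∈ chainSums V f g', S ≤ S' :=
  ⟨_, add_mem_chainSums hS (abs_sub_mem_chainSums (nonneg_of_mem_chainSums hS).2 hgg'),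
    le_add_of_nonneg_right (abs_nonneg _)⟩

theorem exists_mem_chainSums_ge_of_le_left {f' : C(𝕊 n, ℝ)} (hS : S ∈ chainSums V f g)
    (hf' : 0 ≤ f') (hf'f : f' ≤ f) : ∃ S' ∈ chainSums V f' g, S ≤ S' :=
  ⟨_, add_mem_chainSums (abs_sub_mem_chainSums hf' hf'f) hS, le_add_of_nonneg_left (abs_nonneg _)⟩

theorem exists_mem_chainSums_inf_sup
    (hval : IsValuation V) (hS : S ∈ chainSums V f g) (hh : 0 ≤ h) :
    ∃ S₁ ∈ chainSums V (f ⊓ h) (g ⊓ h), ∃ S₂ ∈ chainSums V (f ⊔ h) (g ⊔ h), S ≤ S₁ + S₂ := by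
  obtain ⟨m, c, rfl, rfl, hmono, hpos, rfl⟩ := hS
  refine ⟨_, ⟨m, (· ⊓ h) ∘ c, rfl, rfl, fun k hk => inf_le_inf_right h (hmono k hk),
      fun k hk => le_inf (hpos k hk) hh, rfl⟩,
    _, ⟨m, (· ⊔ h) ∘ c, rfl, rfl, fun k hk => sup_le_sup_right (hmono k hk) h,
      fun k hk => (hpos k hk).trans le_sup_left, rfl⟩, ?_⟩
  rw [← Finset.sum_add_distrib]
  refine Finset.sum_le_sum fun k hk => ?_
  rw [Finset.mem_range] at hk
  have h₁ := hval (c (k + 1)) h (hpos (k + 1) hk) hh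
  have h₀ := hval (c k) h (hpos k hk.le) hh
  calc |V (c (k + 1)) - V (c k)|
      = |(V (c (k + 1) ⊓ h) - V (c k ⊓ h)) + (V (c (k + 1) ⊔ h) - V (c k ⊔ h))| := by
        congr 1; linarith
    _ ≤ _ := abs_add_le _ _

theorem exists_mem_chainSums_add_of_le_of_le
    (hval : IsValuation V) (hS : S ∈ chainSums V f g) (hfh : f ≤ h) (hhg : h ≤ g) :
    ∃ S₁ ∈ chainSums V f h, ∃ S₂ ∈ chainSums V h g, S ≤ S₁ + S₂ := by
  have := exists_mem_chainSums_inf_sup hval hS ((nonneg_of_mem_chainSums hS).1.trans hfh)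
  rwa [inf_eq_left.2 hfh, inf_eq_right.2 hhg, sup_eq_right.2 hfh, sup_eq_left.2 hhg] at this

theorem exists_pos_forall_abs_sub_le (hcont : ContinuousOnNonneg V)
    {c : ℕ → C(𝕊 n, ℝ)} {m : ℕ} (hpos : ∀ k ≤ m, 0 ≤ c k) {ε : ℝ} (hε : 0 < ε) :
    ∃ η > 0, ∀ k ≤ m, ∀ g, 0 ≤ g → (∀ x, |c k x - g x| ≤ η) → |V (c k) - V g| ≤ ε := by
  have hev : ∀ k ∈ Iic m, ∀ᶠ η in 𝓝[>] (0 : ℝ),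
      ∀ g, 0 ≤ g → (∀ x, |c k x - g x| ≤ η) → |V (c k) - V g| ≤ ε := by
    intro k hk
    obtain ⟨δ, hδ, hcδ⟩ := hcont (c k) (hpos k hk) ε hε
    filter_upwards [nhdsWithin_le_nhds (Iic_mem_nhds hδ)] with η hη g hg hclose
    exact hcδ g hg fun x => (hclose x).trans hη
  obtain ⟨η, hη, hη0⟩ := (((finite_Iic m).eventually_all.2 hev).and self_mem_nhdsWithin).exists
  exact ⟨η, hη0, fun k hk => hη k hk⟩

theorem exists_pos_forall_map_mem_chainSums_ge (hcont : ContinuousOnNonneg V)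
    (hS : S ∈ chainSums V f g) {ε : ℝ} (hε : 0 < ε) :
    ∃ η > 0, ∀ Φ : C(𝕊 n, ℝ) → C(𝕊 n, ℝ), Monotone Φ → (∀ u, 0 ≤ u → 0 ≤ Φ u) →
      (∀ u, 0 ≤ u → ∀ x, |u x - Φ u x| ≤ η) → ∃ S' ∈ chainSums V (Φ f) (Φ g), S - ε ≤ S' := by
  obtain ⟨m, c, rfl, rfl, hmono, hpos, rfl⟩ := hS
  set ε' := ε / (2 * (m + 1)) with hε'
  obtain ⟨η, hη, hclose⟩ := exists_pos_forall_abs_sub_le hcont hpos (ε := ε') (by positivity)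
  refine ⟨η, hη, fun Φ hΦ hΦpos hΦη => ⟨_, ⟨m, Φ ∘ c, rfl, rfl, fun k hk => hΦ (hmono k hk),
    fun k hk => hΦpos _ (hpos k hk), rfl⟩, ?_⟩⟩
  have hV : ∀ k ≤ m, |V (c k) - V (Φ (c k))| ≤ ε' := fun k hk =>
    hclose k hk _ (hΦpos _ (hpos k hk)) (hΦη _ (hpos k hk))
  have hterm : ∀ k ∈ Finset.range m,
      |V (c (k + 1)) - V (c k)| ≤ |V (Φ (c (k + 1))) - V (Φ (c k))| + 2 * ε' := by
    intro k hk
    rw [Finset.mem_range] at hk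
    have h₁ := hV (k + 1) hk
    have h₀ := hV k hk.le
    rw [abs_sub_comm] at h₀
    calc |V (c (k + 1)) - V (c k)|
        = |(V (c (k + 1)) - V (Φ (c (k + 1)))) + (V (Φ (c (k + 1))) - V (Φ (c k)))
            + (V (Φ (c k)) - V (c k))| := by ring_nf
      _ ≤ _ := abs_add_three _ _ _
      _ ≤ _ := by linarith
  have hmε : (m : ℝ) * (2 * ε') ≤ ε := by
    rw [show (m : ℝ) * (2 * ε') = m / (m + 1) * ε by rw [hε']; field_simp]
    exact mul_le_of_le_one_left hε.le ((div_le_one (by positivity)).2 (by linarith))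
  have := Finset.sum_le_sum hterm
  rw [Finset.sum_add_distrib, Finset.sum_const, Finset.card_range, nsmul_eq_mul] at this
  simp only [Function.comp_apply]
  linarith

theorem variation_mono_right {a : C(𝕊 n, ℝ)} (ha : 0 ≤ a) (hag : a ≤ g) (hgh : g ≤ h)
    (hbdd : BddAbove (chainSums V a h)) : variation V a g ≤ variation V a h :=
  csSup_le ⟨_, abs_sub_mem_chainSums ha hag⟩ fun _ hS =>
    let ⟨_, hS', hle⟩ := exists_mem_chainSums_ge_of_le_right hS hgh
    hle.trans (le_csSup hbdd hS')

theorem variation_le_variation_add (hval : IsValuation V)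
    {a p q : C(𝕊 n, ℝ)} {ε : ℝ} (ha : 0 ≤ a) (hap : a ≤ p) (hpq : p ≤ q) (hag : a ≤ g)
    (hgq : g ≤ q) (hbdd : BddAbove (chainSums V a p)) (hsmall : ∀ S ∈ chainSums V p q, S ≤ ε) :
    variation V a g ≤ variation V a p + ε :=
  csSup_le ⟨_, abs_sub_mem_chainSums ha hag⟩ fun S hS => by
    obtain ⟨S', hS', hSS'⟩ := exists_mem_chainSums_ge_of_le_right hS hgq
    obtain ⟨S₁, hS₁, S₂, hS₂, hS'S⟩ := exists_mem_chainSums_add_of_le_of_le hval hS' hap hpq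
    have hS₁p : S₁ ≤ variation V a p := le_csSup hbdd hS₁
    linarith [hsmall S₂ hS₂]

theorem exists_pos_forall_mem_chainSums_add_const_le
    (hcont : ContinuousOnNonneg V) (hbdd : BddAbove (chainSums V f (f + const _ 1)))
    {ε : ℝ} (hε : 0 < ε) :
    ∃ δ > 0, ∀ S ∈ chainSums V f (f + const _ δ), S ≤ ε := by
  obtain ⟨M, hM⟩ := hbdd
  refine exists_pos_forall_le_of_almost_superadditive (M := M) (fun t ht S hS => ?_)
    (fun s _ S hS e he => ?_) hε
  · obtain ⟨S', hS', hSS'⟩ :=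
      exists_mem_chainSums_ge_of_le_right (g' := f + const _ 1) hS
        (add_le_add le_rfl fun _ => by simpa using ht.2)
    exact hSS'.trans (hM hS')
  · obtain ⟨η, hη, hΦ⟩ := exists_pos_forall_map_mem_chainSums_ge hcont hS he
    refine ⟨η, hη, fun t ht S' hS' => ?_⟩
    obtain ⟨S'', hS'', hSS''⟩ := hΦ (· + const _ t) (fun _ _ huv => add_le_add huv le_rfl)
      (fun u hu => add_nonneg hu fun _ => ht.1.le)
      (fun u _ x => by simpa [abs_of_pos ht.1] using ht.2)
    refine ⟨S' + S'', ?_, by linarith⟩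
    convert add_mem_chainSums hS' hS'' using 2
    ext x
    simp only [ContinuousMap.add_apply, const_apply]
    ring

theorem exists_pos_forall_mem_chainSums_posPart_sub_const_le
    (hcont : ContinuousOnNonneg V) (hbdd : BddAbove (chainSums V 0 f)) {ε : ℝ} (hε : 0 < ε) :
    ∃ δ > 0, ∀ S ∈ chainSums V (f - const _ δ)⁺ f, S ≤ ε := by
  obtain ⟨M, hM⟩ := hbdd
  refine exists_pos_forall_le_of_almost_superadditive (M := M) (fun t _ S hS => ?_)
    (fun s _ S hS e he => ?_) hε
  · obtain ⟨S', hS', hSS'⟩ := exists_mem_chainSums_ge_of_le_left hS le_rfl (posPart_nonneg _)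
    exact hSS'.trans (hM hS')
  · obtain ⟨η, hη, hΦ⟩ := exists_pos_forall_map_mem_chainSums_ge hcont hS he
    refine ⟨η, hη, fun t ⟨ht, htη⟩ S' hS' => ?_⟩
    have hclose : ∀ u : C(𝕊 n, ℝ), 0 ≤ u → ∀ x, |u x - ((u - const _ t)⁺ : C(𝕊 n, ℝ)) x| ≤ η := by
      intro u hu x
      have hux : 0 ≤ u x := hu x
      simp only [posPart_def, ContinuousMap.sup_apply, ContinuousMap.sub_apply, const_apply,
        ContinuousMap.zero_apply]
      rw [abs_le]
      constructor <;> cases max_cases (u x - t) 0 <;> linarith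
    obtain ⟨S'', hS'', hSS''⟩ := hΦ (fun u => (u - const _ t)⁺)
      (fun _ _ huv => posPart_mono (sub_le_sub_right huv _)) (fun u _ => posPart_nonneg _) hclose
    refine ⟨S'' + S', ?_, by linarith⟩
    convert add_mem_chainSums hS'' hS' using 2
    ext x
    simp only [posPart_def, ContinuousMap.sup_apply, ContinuousMap.sub_apply, const_apply,
      ContinuousMap.zero_apply]
    rcases le_total (f x - s) 0 with h | h
    · rw [max_eq_right h, max_eq_right (by linarith), max_eq_right (by linarith)]
    · rw [max_eq_left h, sub_sub, add_comm s t]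

end Chains

theorem stmt11_general (V : C(Metric.sphere (0 : EuclideanSpace ℝ (Fin n)) 1, ℝ) → ℝ)
    (hval : ∀ f g, 0 ≤ f → 0 ≤ g → V (f ⊔ g) + V (f ⊓ g) = V f + V g)
    (hcont : ∀ f, 0 ≤ f → ∀ ε > (0:ℝ), ∃ δ > (0:ℝ), ∀ g, 0 ≤ g →
      (∀ t, |f t - g t| ≤ δ) → |V f - V g| ≤ ε)
    (hbv : ∀ f g, 0 ≤ f → f ≤ g → BddAbove (chainSums V f g)) :
    ∀ f, 0 ≤ f → ∀ ε > (0:ℝ), ∃ δ > (0:ℝ), ∀ h, 0 ≤ h →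
      (∀ t, |f t - h t| ≤ δ) → |variation V 0 f - variation V 0 h| ≤ ε := by
  intro f hf ε hε
  have hf_le : f ≤ f + const _ 1 := le_add_of_nonneg_right fun _ => zero_le_one
  obtain ⟨δ₁, hδ₁, hsmall₁⟩ :=
    exists_pos_forall_mem_chainSums_add_const_le hcont (hbv _ _ hf hf_le) hε
  obtain ⟨δ₂, hδ₂, hsmall₂⟩ :=
    exists_pos_forall_mem_chainSums_posPart_sub_const_le hcont (hbv 0 f le_rfl hf) hε
  refine ⟨min δ₁ δ₂, lt_min hδ₁ hδ₂, fun h hh hfh => ?_⟩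
  have hfh₁ x : |f x - h x| ≤ δ₁ := (hfh x).trans (min_le_left _ _)
  have hfh₂ x : |f x - h x| ≤ δ₂ := (hfh x).trans (min_le_right _ _)
  have hh_le : h ≤ f + const _ δ₁ := fun x => by
    simpa using (abs_le.1 (hfh₁ x)).1
  have hle_h : (f - const _ δ₂)⁺ ≤ h := fun x => by
    simpa [posPart_def] using ⟨by linarith [(abs_le.1 (hfh₂ x)).2], hh x⟩
  have hle_f : (f - const _ δ₂)⁺ ≤ f := fun x => by
    simpa [posPart_def] using ⟨hδ₂.le, hf x⟩
  have hvar_f : variation V 0 f ≤ variation V 0 h + ε := calc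
    variation V 0 f ≤ variation V 0 (f - const _ δ₂)⁺ + ε :=
      variation_le_variation_add hval le_rfl (posPart_nonneg _) hle_f hf le_rfl
        (hbv 0 _ le_rfl (posPart_nonneg _)) hsmall₂
    _ ≤ variation V 0 h + ε := by
      gcongr
      exact variation_mono_right le_rfl (posPart_nonneg _) hle_h (hbv 0 h le_rfl hh)
  have hvar_h : variation V 0 h ≤ variation V 0 f + ε :=
    variation_le_variation_add hval le_rfl hf
      (le_add_of_nonneg_right fun _ => by simpa using hδ₁.le) hh hh_le (hbv 0 f le_rfl hf) hsmall₁
  exact abs_sub_le_iff.2 ⟨by linarith, by linarith⟩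

/-- If a valuation `V` on `C(S^{n-1})₊` is continuous, uniformly continuous on bounded
sets, and of bounded variation, then its variation function `|V|(f) = |V|([0,f])`
is continuous with respect to the supremum norm. -/
theorem stmt11 (V : C(Metric.sphere (0 : EuclideanSpace ℝ (Fin n)) 1, ℝ) → ℝ)
    (hval : ∀ f g, 0 ≤ f → 0 ≤ g → V (f ⊔ g) + V (f ⊓ g) = V f + V g)
    (hcont : ∀ f, 0 ≤ f → ∀ ε > (0:ℝ), ∃ δ > (0:ℝ), ∀ g, 0 ≤ g →
      (∀ t, |f t - g t| ≤ δ) → |V f - V g| ≤ ε)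
    (hucb : ∀ lam > (0:ℝ), ∀ ε > (0:ℝ), ∃ δ > (0:ℝ),
      ∀ f g : C(Metric.sphere (0 : EuclideanSpace ℝ (Fin n)) 1, ℝ), 0 ≤ f → 0 ≤ g →
      (∀ t, f t ≤ lam) → (∀ t, g t ≤ lam) → (∀ t, |f t - g t| ≤ δ) → |V f - V g| ≤ ε)
    (hbv : ∀ f g, 0 ≤ f → f ≤ g → BddAbove (chainSums V f g)) :
    ∀ f, 0 ≤ f → ∀ ε > (0:ℝ), ∃ δ > (0:ℝ), ∀ h, 0 ≤ h →
      (∀ t, |f t - h t| ≤ δ) → |variation V 0 f - variation V 0 h| ≤ ε :=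
  stmt11_general V hval hcont hbv
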